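/- With q, Π, Q as above (q continuous strictly increasing, branch fixed by Q(a) ∈ e^{iπ/4}·ℝ₊ where a = q(-1)), for every t > 0 one has Re Q(a - it) > 0 and Re Q(b - it) < 0, where b = q(1). Consequently, for each fixed t > 0 the equation Re Q(c - it) = 0 has exactly one solution c ∈ (a, b). -/

import Mathlib

open Complex Set

/-- `Q(λ) = ∫_{-1}^1 √(i(q(x)-λ)) dx` with the branch fixed by `Q(q(-1)) ∈ e^{iπ/4}·ℝ₊`,
realized via the principal square root as `e^{iπ/4}·(q(x)-λ)^{1/2}`. -/
noncomputable def Qmodel (q : ℝ → ℝ) (lam : ℂ) : ℂ :=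
  ∫ x in (-1:ℝ)..1, Complex.exp ((Real.pi : ℂ) * Complex.I / 4) *
    ((q x : ℂ) - lam) ^ ((1:ℂ)/2)

/-!
Writing `λ = c - it`, the real part of the integrand of `Q` is `G_t(q(x) - c)`, where
`G_t(u) = Re(e^{iπ/4} √(u + it)) = (√(r + u) - √(r - u))/2` with `r = |u + it|`
(`sqrtRotRe t u`). For `t > 0`, `r + u` increases and `r - u` decreases strictly in `u`, so `G_t`
is strictly increasing with `G_t(0) = 0`. Hence `c ↦ Re Q(c - it)` is continuous and strictly decreasing,
positive at `c = q(-1)` (where `q(x) - c ≥ 0`) and negative at `c = q(1)` (where `q(x) - c ≤ 0`),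
and the intermediate value theorem gives exactly one zero in between.
-/

/-- `Re (e^{iπ/4} √(u + it))` for `t ≥ 0`, by `re_exp_pi_div_four_mul_cpow_half`. -/
noncomputable def sqrtRotRe (t u : ℝ) : ℝ :=
  (√(√(u ^ 2 + t ^ 2) + u) - √(√(u ^ 2 + t ^ 2) - u)) / 2

section sqrtRotRe

variable {t : ℝ}

lemma abs_le_sqrt_sq_add_sq (t u : ℝ) : |u| ≤ √(u ^ 2 + t ^ 2) :=
  Real.abs_le_sqrt (by nlinarith)

lemma abs_lt_sqrt_sq_add_sq (ht : 0 < t) (u : ℝ) : |u| < √(u ^ 2 + t ^ 2) :=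
  (Real.lt_sqrt (abs_nonneg u)).2 (by rw [sq_abs]; nlinarith)

lemma strictMono_sqrt_sq_add_sq_add (ht : 0 < t) :
    StrictMono fun u : ℝ => √(u ^ 2 + t ^ 2) + u := by
  intro u₁ u₂ h
  have hr₁ : √(u₁ ^ 2 + t ^ 2) ^ 2 = u₁ ^ 2 + t ^ 2 := Real.sq_sqrt (by positivity)
  have hr₂ : √(u₂ ^ 2 + t ^ 2) ^ 2 = u₂ ^ 2 + t ^ 2 := Real.sq_sqrt (by positivity)
  have hu₁ := abs_lt.1 (abs_lt_sqrt_sq_add_sq ht u₁)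
  have hu₂ := abs_lt.1 (abs_lt_sqrt_sq_add_sq ht u₂)
  -- `r₂ - r₁ = (u₂ - u₁)(u₁ + u₂)/(r₁ + r₂)` and `|u₁ + u₂| < r₁ + r₂`
  nlinarith

lemma strictAnti_sqrt_sq_add_sq_sub (ht : 0 < t) :
    StrictAnti fun u : ℝ => √(u ^ 2 + t ^ 2) - u := by
  intro u₁ u₂ h
  simpa [sub_eq_add_neg] using strictMono_sqrt_sq_add_sq_add ht (neg_lt_neg h)

lemma sqrtRotRe_zero (t : ℝ) : sqrtRotRe t 0 = 0 := by
  simp [sqrtRotRe]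

lemma strictMono_sqrtRotRe (ht : 0 < t) : StrictMono (sqrtRotRe t) := by
  intro u₁ u₂ h
  have hu₁ := abs_le.1 (abs_le_sqrt_sq_add_sq t u₁)
  have hu₂ := abs_le.1 (abs_le_sqrt_sq_add_sq t u₂)
  have hadd := Real.sqrt_lt_sqrt (by linarith) (strictMono_sqrt_sq_add_sq_add ht h)
  have hsub := Real.sqrt_lt_sqrt (by linarith) (strictAnti_sqrt_sq_add_sq_sub ht h)
  unfold sqrtRotRe
  linarith

lemma continuous_sqrtRotRe (t : ℝ) : Continuous (sqrtRotRe t) := by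
  unfold sqrtRotRe
  fun_prop

lemma re_exp_pi_div_four_mul_cpow_half (ht : 0 ≤ t) (u : ℝ) :
    (Complex.exp ((Real.pi : ℂ) * Complex.I / 4) * ((u : ℂ) + Complex.I * t) ^ ((1:ℂ)/2)).re =
      sqrtRotRe t u := by
  set z : ℂ := (u : ℂ) + Complex.I * t
  have hz_re : z.re = u := by simp [z]
  have hz_im : z.im = t := by simp [z]
  have hz_norm : ‖z‖ = √(u ^ 2 + t ^ 2) := by
    rw [Complex.norm_def, Complex.normSq_apply, hz_re, hz_im]
    ring_nf
  have hexp : (Real.pi : ℂ) * Complex.I / 4 = ((Real.pi / 4 : ℝ) : ℂ) * Complex.I := by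
    push_cast
    ring
  rw [one_div, Complex.mul_re, hexp, Complex.exp_ofReal_mul_I_re, Complex.exp_ofReal_mul_I_im,
    Complex.cpow_inv_two_re, Complex.cpow_inv_two_im_eq_sqrt (hz_im ▸ ht), hz_norm, hz_re,
    Real.cos_pi_div_four, Real.sin_pi_div_four]
  have hu := abs_le.1 (abs_le_sqrt_sq_add_sq t u)
  have hsqrt2 : √2 * √2 = 2 := Real.mul_self_sqrt (by norm_num)
  rw [Real.sqrt_div (by linarith) 2, Real.sqrt_div (by linarith) 2, sqrtRotRe]
  field_simp

end sqrtRotRe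

lemma re_Qmodel_eq_integral_sqrtRotRe {q : ℝ → ℝ} (hq : ContinuousOn q (Icc (-1) 1)) {t : ℝ}
    (ht : 0 < t) (c : ℝ) :
    (Qmodel q ((c : ℂ) - Complex.I * t)).re = ∫ x in (-1:ℝ)..1, sqrtRotRe t (q x - c) := by
  have hbase : ∀ x, (q x : ℂ) - ((c : ℂ) - Complex.I * t) = ((q x - c : ℝ) : ℂ) + Complex.I * t :=
    fun x => by push_cast; ring
  have hcpow : ContinuousOn (fun x => ((q x : ℂ) - ((c : ℂ) - Complex.I * t)) ^ ((1:ℂ)/2))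
      (Icc (-1) 1) := by
    refine ContinuousOn.cpow_const (by fun_prop) fun x _ => Complex.mem_slitPlane_iff.2 (.inr ?_)
    simpa using ht.ne'
  have hint : IntervalIntegrable (fun x => Complex.exp ((Real.pi : ℂ) * Complex.I / 4) *
      ((q x : ℂ) - ((c : ℂ) - Complex.I * t)) ^ ((1:ℂ)/2)) MeasureTheory.volume (-1) 1 :=
    (continuousOn_const.mul hcpow).intervalIntegrable_of_Icc (by norm_num)
  rw [Qmodel, ← Complex.reCLM_apply, ← Complex.reCLM.intervalIntegral_comp_comm hint]
  simp only [Complex.reCLM_apply, hbase, re_exp_pi_div_four_mul_cpow_half ht.le]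

section IntegralCompSub

variable {g q : ℝ → ℝ} {a b : ℝ}

lemma continuous_integral_comp_sub (hg : Continuous g) (hab : a ≤ b)
    (hq : ContinuousOn q (Icc a b)) :
    Continuous fun c => ∫ x in a..b, g (q x - c) := by
  set q' : ℝ → ℝ := IccExtend hab ((Icc a b).domRestrict q)
  have hq' : Continuous q' := hq.domRestrict.Icc_extend'
  have hqq' : ∀ c, (∫ x in a..b, g (q x - c)) = ∫ x in a..b, g (q' x - c) := fun c =>
    intervalIntegral.integral_congr fun x hx => by
      rw [uIcc_of_le hab] at hx
      simp [q', IccExtend_of_mem hab _ hx]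
  simp only [hqq']
  exact intervalIntegral.continuous_parametric_intervalIntegral_of_continuous'
    (by fun_prop) a b

lemma strictAnti_integral_comp_sub (hg : Continuous g) (hg_mono : StrictMono g) (hab : a < b)
    (hq : ContinuousOn q (Icc a b)) :
    StrictAnti fun c => ∫ x in a..b, g (q x - c) := by
  have hcont : ∀ c, ContinuousOn (fun x => g (q x - c)) (Icc a b) := fun c =>
    hg.comp_continuousOn (hq.sub continuousOn_const)
  intro c₁ c₂ hc
  refine intervalIntegral.integral_lt_integral_of_continuousOn_of_le_of_exists_lt hab
    (hcont c₂) (hcont c₁) (fun x _ => (hg_mono (by linarith)).le) ?_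
  exact ⟨b, right_mem_Icc.2 hab.le, hg_mono (by linarith)⟩

lemma integral_comp_sub_left_pos (hg : Continuous g) (hg_mono : StrictMono g) (hg0 : g 0 = 0)
    (hab : a < b) (hq : ContinuousOn q (Icc a b)) (hq_mono : StrictMonoOn q (Icc a b)) :
    0 < ∫ x in a..b, g (q x - q a) := by
  have hpos : ∀ x ∈ Ioc a b, 0 < g (q x - q a) := fun x hx => by
    have := hq_mono (left_mem_Icc.2 hab.le) (Ioc_subset_Icc_self hx) hx.1
    exact hg0 ▸ hg_mono (by linarith)
  simpa using intervalIntegral.integral_lt_integral_of_continuousOn_of_le_of_exists_lt hab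
    continuousOn_const (hg.comp_continuousOn (hq.sub continuousOn_const))
    (fun x hx => (hpos x hx).le) ⟨b, right_mem_Icc.2 hab.le, hpos b ⟨hab, le_rfl⟩⟩

lemma integral_comp_sub_right_neg (hg : Continuous g) (hg_mono : StrictMono g) (hg0 : g 0 = 0)
    (hab : a < b) (hq : ContinuousOn q (Icc a b)) (hq_mono : StrictMonoOn q (Icc a b)) :
    ∫ x in a..b, g (q x - q b) < 0 := by
  have hnonpos : ∀ x ∈ Icc a b, g (q x - q b) ≤ 0 := fun x hx => by
    have := hq_mono.monotoneOn hx (right_mem_Icc.2 hab.le) hx.2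
    exact hg0 ▸ hg_mono.monotone (by linarith)
  have hneg : g (q a - q b) < 0 := by
    have := hq_mono (left_mem_Icc.2 hab.le) (right_mem_Icc.2 hab.le) hab
    exact hg0 ▸ hg_mono (by linarith)
  simpa using intervalIntegral.integral_lt_integral_of_continuousOn_of_le_of_exists_lt hab
    (hg.comp_continuousOn (hq.sub continuousOn_const)) continuousOn_const
    (fun x hx => hnonpos x (Ioc_subset_Icc_self hx)) ⟨a, left_mem_Icc.2 hab.le, hneg⟩

end IntegralCompSub

lemma existsUnique_mem_Ioo_eq_zero_of_strictAnti {f : ℝ → ℝ} {a b : ℝ} (hf : Continuous f)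
    (hf_anti : StrictAnti f) (ha : 0 < f a) (hb : f b < 0) :
    ∃! c, c ∈ Ioo a b ∧ f c = 0 := by
  have hab : a ≤ b := (hf_anti.lt_iff_gt.1 (hb.trans ha)).le
  obtain ⟨c, hc, hfc⟩ := intermediate_value_Ioo' hab hf.continuousOn ⟨hb, ha⟩
  exact ⟨c, ⟨hc, hfc⟩, fun c' ⟨_, hfc'⟩ => hf_anti.injective (hfc'.trans hfc.symm)⟩

/-- For every `t > 0`, `Re Q(a-it) > 0` and `Re Q(b-it) < 0` where `a = q(-1)`, `b = q(1)`;
consequently for each fixed `t > 0` the equation `Re Q(c-it) = 0` has exactly one solution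
`c ∈ (a,b)`. -/
theorem stmt_8 (q : ℝ → ℝ) (hq : ContinuousOn q (Icc (-1) 1))
    (hmono : StrictMonoOn q (Icc (-1) 1)) :
    ∀ t : ℝ, 0 < t →
      0 < (Qmodel q ((q (-1) : ℂ) - Complex.I * t)).re ∧
      (Qmodel q ((q 1 : ℂ) - Complex.I * t)).re < 0 ∧
      ∃! c : ℝ, c ∈ Ioo (q (-1)) (q 1) ∧
        (Qmodel q ((c : ℂ) - Complex.I * t)).re = 0 := by
  intro t ht
  have h_one : (-1 : ℝ) < 1 := by norm_num
  have hG := continuous_sqrtRotRe t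
  have hG_mono := strictMono_sqrtRotRe ht
  have hpos := integral_comp_sub_left_pos hG hG_mono (sqrtRotRe_zero t) h_one hq hmono
  have hneg := integral_comp_sub_right_neg hG hG_mono (sqrtRotRe_zero t) h_one hq hmono
  simp only [re_Qmodel_eq_integral_sqrtRotRe hq ht]
  exact ⟨hpos, hneg, existsUnique_mem_Ioo_eq_zero_of_strictAnti
    (continuous_integral_comp_sub hG h_one.le hq)
    (strictAnti_integral_comp_sub hG hG_mono h_one hq) hpos hneg⟩
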